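/- Let F and G be continuous cdfs with densities f and g, λ ∈ (0,1), H = λF + (1−λ)G, and suppose supp(f) ∪ supp(g) contains an open set U with D_p ⊂ U, where D_p = [H⁻¹(p), H⁻¹(1−p)] for given p ∈ (0,1/2). Let p' < p be such that D_{p'} = [H⁻¹(p'), H⁻¹(1−p')] ⊂ U, and let (H_N) be a sequence of cdfs with sup_{x∈ℝ}|H_N(x) − H(x)| → 0. Then: (A) for every t ∈ [p', 1−p'], H_N⁻¹(t) → H⁻¹(t); (B) [H_N⁻¹(p), H_N⁻¹(1−p)] ⊆ D_{p'} for all sufficiently large N; (C) for every q > p with q < 1/2, D_q ⊆ [H_N⁻¹(p), H_N⁻¹(1−p)] for all sufficiently large N. -/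

import Mathlib

open MeasureTheory Filter Topology

/-- Generalized inverse (quantile function) of a distribution function. -/
noncomputable def qinv (K : ℝ → ℝ) (t : ℝ) : ℝ := sInf {x | t ≤ K x}

/-- `D_q(F,G) = [H⁻¹(q), H⁻¹(1−q)]` with `H = λF + (1−λ)G`. -/
noncomputable def Dp (lam q : ℝ) (F G : ℝ → ℝ) : Set ℝ :=
  Set.Icc (qinv (fun x => lam * F x + (1 - lam) * G x) q)
          (qinv (fun x => lam * F x + (1 - lam) * G x) (1 - q))

namespace Stmt11Aux

/-- The sublevel set used in `qinv` is nonempty when `t < 1`. -/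
lemma qS_nonempty {K : ℝ → ℝ} (h1 : Tendsto K atTop (𝓝 1)) {t : ℝ} (ht1 : t < 1) :
    {x | t ≤ K x}.Nonempty := by
  obtain ⟨c, hc⟩ := (h1.eventually (eventually_gt_nhds ht1)).exists
  exact ⟨c, hc.le⟩

lemma qS_bddBelow {K : ℝ → ℝ} (h0 : Tendsto K atBot (𝓝 0)) {t : ℝ} (ht0 : 0 < t) :
    BddBelow {x | t ≤ K x} := by
  obtain ⟨c₀, hc₀⟩ := eventually_atBot.1 (h0.eventually (eventually_lt_nhds ht0))
  refine ⟨c₀, fun x hx => ?_⟩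
  by_contra h
  push_neg at h
  exact absurd hx (not_le.2 (hc₀ x h.le))

lemma qinv_le_of {K : ℝ → ℝ} (h0 : Tendsto K atBot (𝓝 0)) {t c : ℝ} (ht0 : 0 < t)
    (hc : t ≤ K c) : qinv K t ≤ c :=
  csInf_le (qS_bddBelow h0 ht0) hc

lemma le_qinv_of {K : ℝ → ℝ} (hmono : Monotone K) (h1 : Tendsto K atTop (𝓝 1)) {t c : ℝ}
    (ht1 : t < 1) (hc : K c < t) : c ≤ qinv K t := by
  refine le_csInf (qS_nonempty h1 ht1) (fun x hx => ?_)
  by_contra h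
  push_neg at h
  exact absurd hx (not_le.2 (lt_of_le_of_lt (hmono h.le) hc))

lemma qinv_lt_self {K : ℝ → ℝ} (h0 : Tendsto K atBot (𝓝 0)) {t c : ℝ} (ht0 : 0 < t)
    (hc : c < qinv K t) : K c < t := by
  by_contra h
  push_neg at h
  exact absurd (qinv_le_of h0 ht0 h) (not_le.2 hc)

lemma qinv_mono {K : ℝ → ℝ} (h0 : Tendsto K atBot (𝓝 0)) (h1 : Tendsto K atTop (𝓝 1))
    {s t : ℝ} (hs0 : 0 < s) (hst : s ≤ t) (ht1 : t < 1) : qinv K s ≤ qinv K t :=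
  csInf_le_csInf (qS_bddBelow h0 hs0) (qS_nonempty h1 ht1) (fun x hx => le_trans hst hx)

lemma qinv_spec {K : ℝ → ℝ} (hcont : Continuous K) (h0 : Tendsto K atBot (𝓝 0))
    (h1 : Tendsto K atTop (𝓝 1)) {t : ℝ} (ht0 : 0 < t) (ht1 : t < 1) :
    K (qinv K t) = t := by
  have hne := qS_nonempty h1 ht1
  have hbdd := qS_bddBelow h0 ht0
  have hclosed : IsClosed {x | t ≤ K x} := isClosed_le continuous_const hcont
  have hmem : qinv K t ∈ {x | t ≤ K x} := hclosed.csInf_mem hne hbdd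
  refine le_antisymm ?_ hmem
  by_contra hlt
  push_neg at hlt
  have hev : ∀ᶠ x in 𝓝 (qinv K t), t < K x :=
    (hcont.continuousAt).eventually_const_lt hlt
  have hev' : ∀ᶠ x in 𝓝[<] (qinv K t), t < K x ∧ x < qinv K t := by
    filter_upwards [hev.filter_mono nhdsWithin_le_nhds, self_mem_nhdsWithin] with x h1 h2
    exact ⟨h1, h2⟩
  obtain ⟨x, hx1, hx2⟩ := hev'.exists
  exact absurd (csInf_le hbdd hx1.le) (not_le.2 hx2)

/-- If a cdf is given by a density and tends to 1 at `+∞`, the density is integrable on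
every left ray. -/
lemma density_integrableOn {F f : ℝ → ℝ} (hFd : ∀ x, F x = ∫ t in Set.Iic x, f t)
    (hF1 : Tendsto F atTop (𝓝 1)) : ∀ x, IntegrableOn f (Set.Iic x) := by
  by_contra h
  push_neg at h
  obtain ⟨x₀, hx₀⟩ := h
  have h0 : ∀ᶠ y in atTop, F y = 0 := by
    filter_upwards [eventually_ge_atTop x₀] with y hy
    rw [hFd]
    exact integral_undef fun hint => hx₀ (IntegrableOn.mono_set hint (Set.Iic_subset_Iic.2 hy))
  have hten : Tendsto F atTop (𝓝 0) :=
    Tendsto.congr' (h0.mono fun y hy => hy.symm) tendsto_const_nhds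
  exact one_ne_zero (tendsto_nhds_unique hF1 hten)

/-- If all the integrals of `f` over subintervals of `(a,b]` vanish, then `f = 0` a.e.
on `(a, b]`. (Lebesgue differentiation.) -/
lemma ae_zero_of_integrals_zero {f : ℝ → ℝ} {a b : ℝ} (hint : IntegrableOn f (Set.Ioc a b))
    (h : ∀ x y, a ≤ x → y ≤ b → ∫ t in Set.Ioc x y, f t = 0) :
    ∀ᵐ t, t ∈ Set.Ioc a b → f t = 0 := by
  set f' : ℝ → ℝ := (Set.Ioc a b).indicator f with hf'
  have hint' : Integrable f' := (integrable_indicator_iff measurableSet_Ioc).2 hint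
  have hloc : LocallyIntegrable f' volume := hint'.locallyIntegrable
  have key : ∀ᵐ x, f' x = 0 := by
    filter_upwards [IsUnifLocDoublingMeasure.ae_tendsto_average (μ := volume) hloc 1] with x hx
    have h2 : Tendsto (fun r : ℝ => ⨍ y in Metric.closedBall x r, f' y) (𝓝[>] 0) (𝓝 (f' x)) := by
      refine hx (fun _ => x) id tendsto_id ?_
      filter_upwards [self_mem_nhdsWithin] with r hr
      exact Metric.mem_closedBall_self (by simpa using (le_of_lt hr))
    have h3 : ∀ r : ℝ, (⨍ y in Metric.closedBall x r, f' y) = 0 := by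
      intro r
      have hI : ∫ y in Metric.closedBall x r, f' y = 0 := by
        rw [Real.closedBall_eq_Icc, integral_Icc_eq_integral_Ioc, hf',
          setIntegral_indicator measurableSet_Ioc, Set.Ioc_inter_Ioc]
        exact h _ _ (le_max_right _ _) (min_le_right _ _)
      rw [setAverage_eq, hI, smul_zero]
    have h4 : Tendsto (fun _ : ℝ => (0 : ℝ)) (𝓝[>] (0:ℝ)) (𝓝 (f' x)) :=
      h2.congr fun r => (h3 r)
    exact (tendsto_nhds_unique h4 tendsto_const_nhds)
  filter_upwards [key] with t ht hmem
  rwa [hf', Set.indicator_of_mem hmem] at ht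

/-- Strict increase of `H = λF + (1-λ)G` across an interval covered by the supports. -/
lemma H_strict {lam : ℝ} {F G f g : ℝ → ℝ} (hlam : lam ∈ Set.Ioo (0 : ℝ) 1)
    (hFmono : Monotone F) (hGmono : Monotone G)
    (hFd : ∀ x, F x = ∫ t in Set.Iic x, f t) (hGd : ∀ x, G x = ∫ t in Set.Iic x, g t)
    (hF1 : Tendsto F atTop (𝓝 1)) (hG1 : Tendsto G atTop (𝓝 1))
    {a b : ℝ} (hab : a < b) (hsupp : Set.Ioc a b ⊆ {x | 0 < f x} ∪ {x | 0 < g x}) :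
    lam * F a + (1 - lam) * G a < lam * F b + (1 - lam) * G b := by
  have hFint := density_integrableOn hFd hF1
  have hGint := density_integrableOn hGd hG1
  have hFle : F a ≤ F b := hFmono hab.le
  have hGle : G a ≤ G b := hGmono hab.le
  have hle : lam * F a + (1 - lam) * G a ≤ lam * F b + (1 - lam) * G b := by
    have h1 : lam * F a ≤ lam * F b := mul_le_mul_of_nonneg_left hFle hlam.1.le
    have h2 : (1 - lam) * G a ≤ (1 - lam) * G b :=
      mul_le_mul_of_nonneg_left hGle (by linarith [hlam.2])
    linarith
  rcases lt_or_eq_of_le hle with h | heq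
  · exact h
  exfalso
  -- From equality, F and G are constant on [a,b].
  have hu : lam * (F b - F a) ≥ 0 := mul_nonneg hlam.1.le (by linarith)
  have hv : (1 - lam) * (G b - G a) ≥ 0 := mul_nonneg (by linarith [hlam.2]) (by linarith)
  have hsum : lam * (F b - F a) + (1 - lam) * (G b - G a) = 0 := by linarith [heq]
  have hFab : F b = F a := by
    have : lam * (F b - F a) = 0 := by linarith
    have := (mul_eq_zero.1 this).resolve_left (ne_of_gt hlam.1)
    linarith
  have hGab : G b = G a := by
    have : (1 - lam) * (G b - G a) = 0 := by linarith
    have := (mul_eq_zero.1 this).resolve_left (by intro hz; linarith [hlam.2])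
    linarith
  have hdiff : ∀ (F' f' : ℝ → ℝ), Monotone F' → (∀ x, F' x = ∫ t in Set.Iic x, f' t) →
      (∀ x, IntegrableOn f' (Set.Iic x)) → F' b = F' a →
      ∀ x y, a ≤ x → y ≤ b → ∫ t in Set.Ioc x y, f' t = 0 := by
    intro F' f' hmono hFd' hint' hconst x y hax hyb
    rcases le_or_gt x y with hxy | hxy
    · have hI : F' y - F' x = ∫ t in Set.Ioc x y, f' t := by
        have h := intervalIntegral.integral_Iic_sub_Iic (hint' x) (hint' y)
        rw [intervalIntegral.integral_of_le hxy] at h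
        rw [hFd' x, hFd' y]
        exact h
      have hxyE : F' x = F' y := by
        have h1 : F' x ≤ F' y := hmono hxy
        have h2 : F' y ≤ F' b := hmono hyb
        have h3 : F' a ≤ F' x := hmono hax
        have h4 : F' b = F' a := hconst
        linarith
      rw [← hI, hxyE, sub_self]
    · rw [Set.Ioc_eq_empty (not_lt.2 hxy.le)]
      simp
  have hfz : ∀ᵐ t, t ∈ Set.Ioc a b → f t = 0 :=
    ae_zero_of_integrals_zero ((hFint b).mono_set (fun t ht => ht.2))
      (hdiff F f hFmono hFd hFint hFab)
  have hgz : ∀ᵐ t, t ∈ Set.Ioc a b → g t = 0 :=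
    ae_zero_of_integrals_zero ((hGint b).mono_set (fun t ht => ht.2))
      (hdiff G g hGmono hGd hGint hGab)
  have hAnull : volume {t | t ∈ Set.Ioc a b ∧ f t ≠ 0} = 0 := by
    rw [ae_iff] at hfz
    refine measure_mono_null (fun t ht => ?_) hfz
    exact fun hh => ht.2 (hh ht.1)
  have hBnull : volume {t | t ∈ Set.Ioc a b ∧ g t ≠ 0} = 0 := by
    rw [ae_iff] at hgz
    refine measure_mono_null (fun t ht => ?_) hgz
    exact fun hh => ht.2 (hh ht.1)
  have hcover : Set.Ioc a b ⊆
      {t | t ∈ Set.Ioc a b ∧ f t ≠ 0} ∪ {t | t ∈ Set.Ioc a b ∧ g t ≠ 0} := by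
    intro t ht
    rcases hsupp ht with h | h
    · exact Or.inl ⟨ht, ne_of_gt h⟩
    · exact Or.inr ⟨ht, ne_of_gt h⟩
  have hz : volume (Set.Ioc a b) = 0 := by
    refine le_antisymm ?_ zero_le
    calc volume (Set.Ioc a b)
        ≤ volume ({t | t ∈ Set.Ioc a b ∧ f t ≠ 0} ∪ {t | t ∈ Set.Ioc a b ∧ g t ≠ 0}) :=
          measure_mono hcover
      _ ≤ volume {t | t ∈ Set.Ioc a b ∧ f t ≠ 0} + volume {t | t ∈ Set.Ioc a b ∧ g t ≠ 0} :=
          measure_union_le _ _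
      _ = 0 := by rw [hAnull, hBnull, add_zero]
  rw [Real.volume_Ioc] at hz
  exact absurd hz (ne_of_gt (ENNReal.ofReal_pos.2 (sub_pos.2 hab)))

end Stmt11Aux

open Stmt11Aux in
theorem stmt_11 (lam p p' : ℝ) (hlam : lam ∈ Set.Ioo (0 : ℝ) 1)
    (hp : p ∈ Set.Ioo (0 : ℝ) (1 / 2)) (hp'0 : 0 < p') (hp'p : p' < p)
    (F G f g : ℝ → ℝ)
    (hFcont : Continuous F) (hGcont : Continuous G)
    (hFmono : Monotone F) (hGmono : Monotone G)
    (hF0 : Tendsto F atBot (𝓝 0)) (hF1 : Tendsto F atTop (𝓝 1))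
    (hG0 : Tendsto G atBot (𝓝 0)) (hG1 : Tendsto G atTop (𝓝 1))
    (hFd : ∀ x, F x = ∫ t in Set.Iic x, f t) (hGd : ∀ x, G x = ∫ t in Set.Iic x, g t)
    (U : Set ℝ) (hUopen : IsOpen U) (hDpU : Dp lam p F G ⊆ U)
    (hUsupp : U ⊆ {x | 0 < f x} ∪ {x | 0 < g x})
    (hDp'U : Dp lam p' F G ⊆ U)
    (HN : ℕ → ℝ → ℝ)
    (hHNcdf : ∀ k, Monotone (HN k) ∧
      Tendsto (HN k) atBot (𝓝 0) ∧ Tendsto (HN k) atTop (𝓝 1))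
    (hHNconv : TendstoUniformly (fun k x => HN k x)
      (fun x => lam * F x + (1 - lam) * G x) atTop) :
    (∀ t ∈ Set.Icc p' (1 - p'),
      Tendsto (fun k => qinv (HN k) t) atTop
        (𝓝 (qinv (fun x => lam * F x + (1 - lam) * G x) t))) ∧
    (∀ᶠ k in atTop, Set.Icc (qinv (HN k) p) (qinv (HN k) (1 - p)) ⊆ Dp lam p' F G) ∧
    (∀ q : ℝ, p < q → q < 1 / 2 →
      ∀ᶠ k in atTop, Dp lam q F G ⊆ Set.Icc (qinv (HN k) p) (qinv (HN k) (1 - p))) := by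
  set H : ℝ → ℝ := fun x => lam * F x + (1 - lam) * G x with hHdef
  have hlam1 : 0 < 1 - lam := by linarith [hlam.2]
  have hHcont : Continuous H := (continuous_const.mul hFcont).add (continuous_const.mul hGcont)
  have hHmono : Monotone H := fun x y h =>
    add_le_add (mul_le_mul_of_nonneg_left (hFmono h) hlam.1.le)
      (mul_le_mul_of_nonneg_left (hGmono h) hlam1.le)
  have hH0 : Tendsto H atBot (𝓝 0) := by
    have h := (hF0.const_mul lam).add (hG0.const_mul (1 - lam))
    rw [show lam * 0 + (1 - lam) * 0 = 0 by ring] at h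
    exact h
  have hH1 : Tendsto H atTop (𝓝 1) := by
    have h := (hF1.const_mul lam).add (hG1.const_mul (1 - lam))
    rw [show lam * 1 + (1 - lam) * 1 = 1 by ring] at h
    exact h
  have hp0 : (0:ℝ) < p := hp.1
  have hp1 : p < 1 := by linarith [hp.2]
  have hp'1 : p' < 1 := by linarith
  have hp'half : p' < 1/2 := lt_trans hp'p hp.2
  -- membership of t's in (0,1)
  have hIcc : ∀ t ∈ Set.Icc p' (1 - p'), 0 < t ∧ t < 1 := by
    intro t ht
    exact ⟨lt_of_lt_of_le hp'0 ht.1, lt_of_le_of_lt ht.2 (by linarith)⟩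
  -- strict increase of H on intervals in U
  have hSI : ∀ a b : ℝ, a < b → Set.Icc a b ⊆ U → H a < H b := by
    intro a b hab hU'
    exact H_strict hlam hFmono hGmono hFd hGd hF1 hG1 hab
      (fun x hx => hUsupp (hU' ⟨hx.1.le, hx.2⟩))
  -- quantiles of H over [p', 1-p'] lie in U
  have hqU : ∀ t ∈ Set.Icc p' (1 - p'), qinv H t ∈ U := by
    intro t ht
    obtain ⟨ht0, ht1⟩ := hIcc t ht
    refine hDp'U ⟨?_, ?_⟩
    · exact qinv_mono hH0 hH1 hp'0 ht.1 ht1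
    · exact qinv_mono hH0 hH1 ht0 ht.2 (by linarith)
  -- local strict increase to the right of quantiles
  have hRight : ∀ t ∈ Set.Icc p' (1 - p'), ∀ ε > (0:ℝ), ∃ δ : ℝ, 0 < δ ∧ δ ≤ ε ∧
      t < H (qinv H t + δ) := by
    intro t ht ε hε
    obtain ⟨ht0, ht1⟩ := hIcc t ht
    obtain ⟨r, hr, hball⟩ := Metric.isOpen_iff.1 hUopen _ (hqU t ht)
    refine ⟨min ε (r/2), lt_min hε (by linarith), min_le_left _ _, ?_⟩
    set q := qinv H t
    set δ := min ε (r/2)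
    have hδr : δ ≤ r/2 := min_le_right _ _
    have hδ0 : 0 < δ := lt_min hε (by linarith)
    have hsub : Set.Icc q (q + δ) ⊆ U := by
      intro x hx
      refine hball ?_
      rw [Metric.mem_ball, Real.dist_eq, abs_lt]
      constructor <;> [linarith [hx.1]; linarith [hx.2]]
    have := hSI q (q + δ) (by linarith) hsub
    rwa [qinv_spec hHcont hH0 hH1 ht0 ht1] at this
  -- Part A
  have partA : ∀ t ∈ Set.Icc p' (1 - p'),
      Tendsto (fun k => qinv (HN k) t) atTop (𝓝 (qinv H t)) := by
    intro t ht
    obtain ⟨ht0, ht1⟩ := hIcc t ht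
    rw [Metric.tendsto_nhds]
    intro ε hε
    obtain ⟨δ, hδ0, hδε, hδH⟩ := hRight t ht (ε/2) (by linarith)
    set q := qinv H t with hq
    have hlow : H (q - δ) < t := qinv_lt_self hH0 ht0 (by linarith)
    set η : ℝ := min (t - H (q - δ)) (H (q + δ) - t) with hη
    have hη0 : 0 < η := lt_min (by linarith) (by linarith)
    have hconv := (Metric.tendstoUniformly_iff.1 hHNconv) η hη0
    filter_upwards [hconv] with k hk
    have hk1 := hk (q + δ)
    have hk2 := hk (q - δ)
    rw [Real.dist_eq, abs_lt] at hk1 hk2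
    have hub : qinv (HN k) t ≤ q + δ := by
      refine qinv_le_of (hHNcdf k).2.1 ht0 ?_
      have : η ≤ H (q + δ) - t := min_le_right _ _
      linarith [hk1.2]
    have hlb : q - δ ≤ qinv (HN k) t := by
      refine le_qinv_of (hHNcdf k).1 (hHNcdf k).2.2 ht1 ?_
      have : η ≤ t - H (q - δ) := min_le_left _ _
      linarith [hk2.1]
    rw [Real.dist_eq, abs_lt]
    constructor <;> [linarith; linarith]
  -- strict comparison of H-quantiles
  have hqstrict : ∀ s t : ℝ, 0 < s → s < t → t < 1 → qinv H s < qinv H t := by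
    intro s t hs0 hst ht1
    have hle : qinv H s ≤ qinv H t := qinv_mono hH0 hH1 hs0 hst.le ht1
    rcases lt_or_eq_of_le hle with h | h
    · exact h
    exfalso
    have h1 : H (qinv H s) = s := qinv_spec hHcont hH0 hH1 hs0 (by linarith)
    have h2 : H (qinv H t) = t := qinv_spec hHcont hH0 hH1 (by linarith) ht1
    rw [h] at h1
    rw [h1] at h2
    exact absurd h2 (ne_of_lt hst)
  have hpmem : p ∈ Set.Icc p' (1 - p') := ⟨hp'p.le, by linarith [hp.2]⟩
  have h1pmem : (1 - p) ∈ Set.Icc p' (1 - p') := ⟨by linarith [hp.2], by linarith⟩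
  refine ⟨partA, ?_, ?_⟩
  · -- Part B
    have hlt1 : qinv H p' < qinv H p := hqstrict p' p hp'0 hp'p (by linarith)
    have hlt2 : qinv H (1 - p) < qinv H (1 - p') := hqstrict (1 - p) (1 - p')
      (by linarith) (by linarith) (by linarith)
    have e1 := (partA p hpmem).eventually (eventually_gt_nhds hlt1)
    have e2 := (partA (1 - p) h1pmem).eventually (eventually_lt_nhds hlt2)
    filter_upwards [e1, e2] with k hk1 hk2
    exact Set.Icc_subset_Icc hk1.le hk2.le
  · -- Part C
    intro q hpq hq2
    have hq1 : q < 1 := by linarith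
    have hlt1 : qinv H p < qinv H q := hqstrict p q hp0 hpq hq1
    have hlt2 : qinv H (1 - q) < qinv H (1 - p) := hqstrict (1 - q) (1 - p)
      (by linarith) (by linarith) (by linarith)
    have e1 := (partA p hpmem).eventually (eventually_lt_nhds hlt1)
    have e2 := (partA (1 - p) h1pmem).eventually (eventually_gt_nhds hlt2)
    filter_upwards [e1, e2] with k hk1 hk2
    exact Set.Icc_subset_Icc hk1.le hk2.le
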